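/- arXiv:2208.04029 — 5 statements merged into one kernel-verified Lean document; each statement's English description precedes it below -/
import Mathlib

section
/- For all a > 0 and x ≥ 0, the lower incomplete Gamma function satisfies γ(a,x) ≥ (x^a / a) · exp(-a·x/(a+1)), where γ(a,x) = ∫₀ˣ t^(a-1) e^(-t) dt. -/
noncomputable def lowerGamma (a x : ℝ) : ℝ := ∫ t in (0:ℝ)..x, t ^ (a - 1) * Real.exp (-t)

theorem lowerGamma_lower_bound (a x : ℝ) (ha : 0 < a) (hx : 0 ≤ x) :
    x ^ a / a * Real.exp (-(a * x) / (a + 1)) ≤ lowerGamma a x := by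
  rcases eq_or_lt_of_le hx with rfl | hx0
  · simp [lowerGamma, Real.zero_rpow (ne_of_gt ha)]
  set c : ℝ := a * x / (a + 1) with hc
  have hcpos : 0 ≤ c := by positivity
  have ha1 : (-1 : ℝ) < a - 1 := by linarith
  have hint1 : IntervalIntegrable (fun t : ℝ => t ^ (a - 1)) MeasureTheory.volume 0 x :=
    intervalIntegral.intervalIntegrable_rpow' ha1
  have hint2 : IntervalIntegrable (fun t : ℝ => t ^ (a - 1) * Real.exp (-t))
      MeasureTheory.volume 0 x :=
    hint1.mul_continuousOn (Real.continuous_exp.comp continuous_neg).continuousOn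
  have hint3 : IntervalIntegrable (fun t : ℝ => t ^ (a - 1) * (Real.exp (-c) * (1 + c - t)))
      MeasureTheory.volume 0 x :=
    hint1.mul_continuousOn (by fun_prop)
  have key : ∀ t ∈ Set.Icc (0:ℝ) x,
      t ^ (a - 1) * (Real.exp (-c) * (1 + c - t)) ≤ t ^ (a - 1) * Real.exp (-t) := by
    intro t ht
    apply mul_le_mul_of_nonneg_left _ (Real.rpow_nonneg ht.1 _)
    have h := Real.add_one_le_exp (c - t)
    calc Real.exp (-c) * (1 + c - t) ≤ Real.exp (-c) * Real.exp (c - t) := by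
          apply mul_le_mul_of_nonneg_left _ (Real.exp_nonneg _)
          linarith
      _ = Real.exp (-t) := by rw [← Real.exp_add]; ring_nf
  have hmono := intervalIntegral.integral_mono_on hx hint3 hint2 key
  have hcalc : ∫ t in (0:ℝ)..x, t ^ (a - 1) * (Real.exp (-c) * (1 + c - t))
      = Real.exp (-c) * ((1 + c) * (x ^ a / a) - x ^ (a + 1) / (a + 1)) := by
    have e1 : ∫ t in (0:ℝ)..x, t ^ (a - 1) = x ^ a / a := by
      rw [integral_rpow (Or.inl ha1)]
      rw [Real.zero_rpow (by linarith : a - 1 + 1 ≠ 0)]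
      ring_nf
    have e2 : ∫ t in (0:ℝ)..x, t ^ a = x ^ (a + 1) / (a + 1) := by
      rw [integral_rpow (Or.inl (by linarith))]
      rw [Real.zero_rpow (by linarith : a + 1 ≠ 0)]
      ring_nf
    have : ∀ t ∈ Set.uIcc (0:ℝ) x, t ^ (a - 1) * (Real.exp (-c) * (1 + c - t))
        = Real.exp (-c) * ((1 + c) * t ^ (a - 1) - t ^ a) := by
      intro t ht
      rw [Set.uIcc_of_le hx] at ht
      rcases eq_or_lt_of_le ht.1 with rfl | htpos
      · simp [Real.zero_rpow (ne_of_gt ha)]; ring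
      · have : t ^ a = t ^ (a - 1) * t := by
          rw [← Real.rpow_add_one (ne_of_gt htpos)]; ring_nf
        rw [this]; ring
    rw [intervalIntegral.integral_congr this, intervalIntegral.integral_const_mul,
      intervalIntegral.integral_sub ((hint1.const_mul _)) (intervalIntegral.intervalIntegrable_rpow' (by linarith)),
      intervalIntegral.integral_const_mul, e1, e2]
  rw [hcalc] at hmono
  have hxa : x ^ (a + 1) = x ^ a * x := by
    rw [Real.rpow_add_one (ne_of_gt hx0)]
  have hfinal : Real.exp (-c) * ((1 + c) * (x ^ a / a) - x ^ (a + 1) / (a + 1))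
      = x ^ a / a * Real.exp (-(a * x) / (a + 1)) := by
    rw [hxa, hc]
    have h1 : a ≠ 0 := ne_of_gt ha
    have h2 : a + 1 ≠ 0 := by linarith
    rw [neg_div]
    field_simp
    ring
  rw [hfinal] at hmono
  exact hmono
end

section
/- For all a > 0 and x ≥ 0, the lower incomplete Gamma function satisfies γ(a,x) ≤ (x^a / (a(a+1))) · (1 + a·exp(-x)). -/
theorem lowerGamma_upper_bound (a x : ℝ) (ha : 0 < a) (hx : 0 ≤ x) :
    lowerGamma a x ≤ x ^ a / (a * (a + 1)) * (1 + a * Real.exp (-x)) := by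
  rcases eq_or_lt_of_le hx with h0 | hx0
  · subst h0
    simp [lowerGamma, Real.zero_rpow ha.ne']
  set E := Real.exp (-x) with hE
  -- pointwise bound
  have key : ∀ t ∈ Set.Icc (0:ℝ) x,
      t ^ (a - 1) * Real.exp (-t) ≤ t ^ (a - 1) + (E - 1) / x * t ^ a := by
    intro t ht
    obtain ⟨ht0, htx⟩ := ht
    rcases eq_or_lt_of_le ht0 with h | h
    · subst h
      simp [Real.zero_rpow ha.ne']
    · have hs : t / x ≤ 1 := (div_le_one hx0).2 htx
      have hconv := convexOn_exp.2 (Set.mem_univ (0:ℝ)) (Set.mem_univ (-x))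
        (by linarith : (0:ℝ) ≤ 1 - t / x)
        (by positivity : (0:ℝ) ≤ t / x) (by ring)
      simp only [smul_eq_mul, mul_zero, zero_add, mul_neg, Real.exp_zero, mul_one] at hconv
      have harg : (t / x) * x = t := div_mul_cancel₀ t hx0.ne'
      rw [harg] at hconv
      -- hconv : exp (-t) ≤ (1 - t/x) + (t/x) * E
      have hpow : t ^ a = t ^ (a - 1) * t := by
        rw [← Real.rpow_add_one h.ne' (a - 1)]; ring_nf
      have hnn : (0:ℝ) ≤ t ^ (a - 1) := Real.rpow_nonneg ht0 _
      have := mul_le_mul_of_nonneg_left hconv hnn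
      calc t ^ (a - 1) * Real.exp (-t) ≤ t ^ (a - 1) * ((1 - t / x) + (t / x) * E) := this
        _ = t ^ (a - 1) + (E - 1) / x * t ^ a := by
            rw [hpow]; field_simp; ring
  have int_f : IntervalIntegrable (fun t => t ^ (a - 1) * Real.exp (-t))
      MeasureTheory.volume 0 x :=
    (intervalIntegral.intervalIntegrable_rpow' (by linarith : (-1:ℝ) < a - 1)).mul_continuousOn
      (Continuous.continuousOn (by continuity))
  have int_g : IntervalIntegrable (fun t => t ^ (a - 1) + (E - 1) / x * t ^ a)
      MeasureTheory.volume 0 x :=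
    (intervalIntegral.intervalIntegrable_rpow' (by linarith : (-1:ℝ) < a - 1)).add
      ((intervalIntegral.intervalIntegrable_rpow' (by linarith : (-1:ℝ) < a)).const_mul _)
  have hmono : lowerGamma a x ≤ ∫ t in (0:ℝ)..x, (t ^ (a - 1) + (E - 1) / x * t ^ a) :=
    intervalIntegral.integral_mono_on hx int_f int_g key
  have hval : (∫ t in (0:ℝ)..x, (t ^ (a - 1) + (E - 1) / x * t ^ a))
      = x ^ a / a + (E - 1) / x * (x ^ (a + 1) / (a + 1)) := by
    rw [intervalIntegral.integral_add
        (intervalIntegral.intervalIntegrable_rpow' (by linarith : (-1:ℝ) < a - 1))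
        ((intervalIntegral.intervalIntegrable_rpow' (by linarith : (-1:ℝ) < a)).const_mul _),
      intervalIntegral.integral_const_mul,
      integral_rpow (Or.inl (by linarith : (-1:ℝ) < a - 1)),
      integral_rpow (Or.inl (by linarith : (-1:ℝ) < a))]
    rw [Real.zero_rpow (by linarith : a - 1 + 1 ≠ 0),
      Real.zero_rpow (by linarith : a + 1 ≠ 0)]
    ring_nf
  rw [hval] at hmono
  refine hmono.trans (le_of_eq ?_)
  have hxpow : x ^ (a + 1) = x ^ a * x := Real.rpow_add_one hx0.ne' a
  rw [hxpow]
  field_simp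
  ring
end

section
/- For all a > 0 and x ≥ 0, the two-sided estimate (x^a/a)·exp(-a·x/(a+1)) ≤ γ(a,x) ≤ (x^a/a)·min(1, (1 + a·e^{-x})/(a+1)) holds, where γ is the lower incomplete Gamma function. -/
open Real Set intervalIntegral

section

variable {a x : ℝ}

lemma intervalIntegrable_rpow_sub_one_mul (ha : 0 < a) {g : ℝ → ℝ} (hg : Continuous g) :
    IntervalIntegrable (fun t => t ^ (a - 1) * g t) MeasureTheory.volume 0 x :=
  (intervalIntegrable_rpow' (by linarith)).mul_continuousOn hg.continuousOn

lemma integral_rpow_sub_one (ha : 0 < a) : ∫ t in (0 : ℝ)..x, t ^ (a - 1) = x ^ a / a := by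
  rw [integral_rpow (Or.inl (by linarith))]
  simp [zero_rpow ha.ne']

lemma hasDerivAt_rpow_mul_exp_neg_mul (a c : ℝ) {t : ℝ} (ht : 0 < t) :
    HasDerivAt (fun s => s ^ a * exp (-(c * s)))
      (t ^ (a - 1) * ((a - c * t) * exp (-(c * t)))) t := by
  have hpow := hasDerivAt_rpow_const (x := t) (p := a) (Or.inl ht.ne')
  have hexp : HasDerivAt (fun s => exp (-(c * s))) (exp (-(c * t)) * -c) t := by
    simpa using ((hasDerivAt_id t).const_mul c).neg.exp
  refine (hpow.mul hexp).congr_deriv ?_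
  rw [rpow_sub_one ht.ne']
  field_simp
  ring

lemma integral_rpow_mul_sub_mul_exp (c : ℝ) (ha : 0 < a) (hx : 0 ≤ x) :
    ∫ t in (0 : ℝ)..x, t ^ (a - 1) * ((a - c * t) * exp (-(c * t))) = x ^ a * exp (-(c * x)) := by
  have hcont : ContinuousOn (fun t => t ^ a * exp (-(c * t))) (Icc 0 x) :=
    fun t _ => ((continuousAt_rpow_const t a (Or.inr ha.le)).mul
      (by fun_prop)).continuousWithinAt
  rw [integral_eq_sub_of_hasDerivAt_of_le hx hcont
    (fun t ht => hasDerivAt_rpow_mul_exp_neg_mul a c ht.1)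
    (intervalIntegrable_rpow_sub_one_mul ha (by fun_prop))]
  simp [zero_rpow ha.ne']

lemma sub_mul_mul_exp_le (ha : 0 ≤ a) (t : ℝ) :
    (a - a / (a + 1) * t) * exp (-(a / (a + 1) * t)) ≤ a * exp (-t) := by
  have ha₁ : a + 1 ≠ 0 := by positivity
  have hsplit : exp (-t) = exp (-(t / (a + 1))) * exp (-(a / (a + 1) * t)) := by
    rw [← exp_add]
    congr 1
    field_simp
    ring
  have hlin : a - a / (a + 1) * t ≤ a * exp (-(t / (a + 1))) := by
    calc a - a / (a + 1) * t = a * (-(t / (a + 1)) + 1) := by ring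
      _ ≤ a * exp (-(t / (a + 1))) := mul_le_mul_of_nonneg_left (add_one_le_exp _) ha
  rw [hsplit, ← mul_assoc]
  exact mul_le_mul_of_nonneg_right hlin (exp_pos _).le

lemma lowerGamma_le_rpow_div (ha : 0 < a) (hx : 0 ≤ x) : lowerGamma a x ≤ x ^ a / a := by
  rw [← integral_rpow_sub_one ha]
  refine integral_mono_on hx (intervalIntegrable_rpow_sub_one_mul ha (by fun_prop))
    (intervalIntegrable_rpow' (by linarith)) fun t ht => ?_
  exact mul_le_of_le_one_right (rpow_nonneg ht.1 _) (exp_le_one_iff.mpr (by linarith [ht.1]))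

lemma rpow_mul_exp_le_mul_lowerGamma (ha : 0 < a) (hx : 0 ≤ x) :
    x ^ a * exp (-(a / (a + 1) * x)) ≤ a * lowerGamma a x := by
  rw [← integral_rpow_mul_sub_mul_exp _ ha hx, lowerGamma, ← integral_const_mul]
  refine integral_mono_on hx (intervalIntegrable_rpow_sub_one_mul ha (by fun_prop))
    ((intervalIntegrable_rpow_sub_one_mul ha (by fun_prop)).const_mul a) fun t ht => ?_
  calc t ^ (a - 1) * ((a - a / (a + 1) * t) * exp (-(a / (a + 1) * t)))
      ≤ t ^ (a - 1) * (a * exp (-t)) :=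
        mul_le_mul_of_nonneg_left (sub_mul_mul_exp_le ha.le t) (rpow_nonneg ht.1 _)
    _ = a * (t ^ (a - 1) * exp (-t)) := by ring

lemma add_one_mul_lowerGamma_le (ha : 0 < a) (hx : 0 ≤ x) :
    (a + 1) * lowerGamma a x ≤ x ^ a / a + x ^ a * exp (-x) := by
  have hderiv := integral_rpow_mul_sub_mul_exp 1 ha hx
  simp only [one_mul] at hderiv
  have hint₁ : IntervalIntegrable (fun t => t ^ (a - 1)) MeasureTheory.volume 0 x :=
    intervalIntegrable_rpow' (by linarith)
  have hint₂ := intervalIntegrable_rpow_sub_one_mul (x := x) ha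
    (g := fun t => (a - t) * exp (-t)) (by fun_prop)
  rw [← integral_rpow_sub_one ha, ← hderiv, ← integral_add hint₁ hint₂, lowerGamma,
    ← integral_const_mul]
  refine integral_mono_on hx ((intervalIntegrable_rpow_sub_one_mul ha (by fun_prop)).const_mul _)
    (hint₁.add hint₂) fun t ht => ?_
  have hexp : (1 + t) * exp (-t) ≤ 1 := by
    calc (1 + t) * exp (-t) ≤ exp t * exp (-t) :=
          mul_le_mul_of_nonneg_right (by linarith [add_one_le_exp t]) (exp_pos _).le
      _ = 1 := by rw [← exp_add, add_neg_cancel, exp_zero]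
  calc (a + 1) * (t ^ (a - 1) * exp (-t)) = t ^ (a - 1) * ((a + 1) * exp (-t)) := by ring
    _ ≤ t ^ (a - 1) * (1 + (a - t) * exp (-t)) :=
        mul_le_mul_of_nonneg_left (by linarith) (rpow_nonneg ht.1 _)
    _ = t ^ (a - 1) + t ^ (a - 1) * ((a - t) * exp (-t)) := by ring

end

theorem lowerGamma_two_sided (a x : ℝ) (ha : 0 < a) (hx : 0 ≤ x) :
    x ^ a / a * Real.exp (-(a * x) / (a + 1)) ≤ lowerGamma a x ∧
      lowerGamma a x ≤ x ^ a / a * min 1 ((1 + a * Real.exp (-x)) / (a + 1)) := by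
  constructor
  · have hlower := rpow_mul_exp_le_mul_lowerGamma ha hx
    rw [show -(a * x) / (a + 1) = -(a / (a + 1) * x) by ring, div_mul_eq_mul_div,
      div_le_iff₀ ha]
    linarith
  · rw [mul_min_of_nonneg _ _ (by positivity)]
    refine le_min (by simpa using lowerGamma_le_rpow_div ha hx) ?_
    have hupper := add_one_mul_lowerGamma_le ha hx
    rw [show x ^ a / a * ((1 + a * exp (-x)) / (a + 1))
      = (x ^ a / a + x ^ a * exp (-x)) / (a + 1) by field_simp, le_div_iff₀ (by linarith)]
    linarith
end

section
/- Let d ≥ 1, λ > 0, σ > 0, 0 ≤ x ≤ L, and define T(x) = (1/(λ^(d/2) σ²)) ∫ₓᴸ z^(1-d) e^(λ z²) γ(d/2, λ z²) dz. Then T(x) ≤ (2/(σ² d (d+2))) · ( (1/λ)(e^(λ L²) − e^(λ x²)) + (d/2)(L² − x²) ). -/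
noncomputable def mfet (d : ℕ) (lam σ x L : ℝ) : ℝ :=
  (1 / (lam ^ ((d : ℝ) / 2) * σ ^ 2)) *
    ∫ z in x..L, z ^ ((1 : ℝ) - d) * Real.exp (lam * z ^ 2) * lowerGamma ((d : ℝ) / 2) (lam * z ^ 2)

/-!
Since `(1 + t) e^{-t} ≤ 1`, the integrand of `γ(a, y)` is dominated by
`(t^{a-1} + (t^a e^{-t})') / (a + 1)`, which integrates to
`γ(a, y) ≤ y^a / (a (a + 1)) + y^a e^{-y} / (a + 1)`.
With `y = λ z²` and `a = d/2` the factor `z^{1-d} e^{λ z²} γ(d/2, λ z²)` is then at most a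
multiple of `z e^{λ z²} + (d/2) z`, whose integral over `[x, L]` is explicit.
-/

open MeasureTheory intervalIntegral Set Real

lemma lowerGamma_nonneg (a : ℝ) {y : ℝ} (hy : 0 ≤ y) : 0 ≤ lowerGamma a y :=
  integral_nonneg hy fun _ ht => mul_nonneg (rpow_nonneg ht.1 _) (exp_nonneg _)

lemma one_add_mul_exp_neg_le_one (t : ℝ) : (1 + t) * exp (-t) ≤ 1 := by
  rw [exp_neg, ← div_eq_mul_inv, div_le_one (exp_pos t)]
  linarith [add_one_le_exp t]

lemma integral_deriv_rpow_mul_exp_neg {a : ℝ} (ha : 0 < a) {y : ℝ} (hy : 0 ≤ y) :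
    ∫ t in (0:ℝ)..y, (a * t ^ (a - 1) - t ^ a) * exp (-t) = y ^ a * exp (-y) := by
  have hderiv : ∀ t ∈ Ioo (0:ℝ) y,
      HasDerivAt (fun t : ℝ => t ^ a * exp (-t)) ((a * t ^ (a - 1) - t ^ a) * exp (-t)) t := by
    intro t ht
    have hexp : HasDerivAt (fun t : ℝ => exp (-t)) (-exp (-t)) t := by
      simpa using (hasDerivAt_neg t).exp
    exact ((hasDerivAt_rpow_const (Or.inl ht.1.ne')).mul hexp).congr_deriv (by ring)
  have hint : IntervalIntegrable (fun t : ℝ => (a * t ^ (a - 1) - t ^ a) * exp (-t)) volume 0 y :=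
    (((intervalIntegrable_rpow' (by linarith)).const_mul a).sub
      (intervalIntegrable_rpow' (by linarith))).mul_continuousOn (by fun_prop)
  have hcont : ContinuousOn (fun t : ℝ => t ^ a * exp (-t)) (Icc 0 y) :=
    ((continuous_rpow_const ha.le).mul (by fun_prop)).continuousOn
  rw [integral_eq_sub_of_hasDerivAt_of_le hy hcont hderiv hint, zero_rpow ha.ne']
  ring

lemma rpow_sub_one_mul_exp_neg_le {a t : ℝ} (ha : 0 < a) (ht : 0 ≤ t) :
    t ^ (a - 1) * exp (-t) ≤ (t ^ (a - 1) + (a * t ^ (a - 1) - t ^ a) * exp (-t)) / (a + 1) := by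
  have hpow : t ^ a = t ^ (a - 1) * t := by
    simpa using rpow_add_one' ht (by simpa using ha.ne' : a - 1 + 1 ≠ 0)
  rw [le_div_iff₀ (by linarith), hpow]
  nlinarith [mul_le_mul_of_nonneg_left (one_add_mul_exp_neg_le_one t) (rpow_nonneg ht (a - 1))]

lemma lowerGamma_le {a : ℝ} (ha : 0 < a) {y : ℝ} (hy : 0 ≤ y) :
    lowerGamma a y ≤ y ^ a / (a * (a + 1)) + y ^ a * exp (-y) / (a + 1) := by
  have hpow : IntervalIntegrable (fun t : ℝ => t ^ (a - 1)) volume 0 y :=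
    intervalIntegrable_rpow' (by linarith)
  have hderiv : IntervalIntegrable
      (fun t : ℝ => (a * t ^ (a - 1) - t ^ a) * exp (-t)) volume 0 y :=
    ((hpow.const_mul a).sub (intervalIntegrable_rpow' (by linarith))).mul_continuousOn
      (by fun_prop)
  have hint_pow : ∫ t in (0:ℝ)..y, t ^ (a - 1) = y ^ a / a := by
    rw [integral_rpow (Or.inl (by linarith)), sub_add_cancel, zero_rpow ha.ne', sub_zero]
  calc lowerGamma a y
      ≤ ∫ t in (0:ℝ)..y, (t ^ (a - 1) + (a * t ^ (a - 1) - t ^ a) * exp (-t)) / (a + 1) :=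
        integral_mono_on hy (hpow.mul_continuousOn (by fun_prop))
          ((hpow.add hderiv).div_const _) fun t ht => rpow_sub_one_mul_exp_neg_le ha ht.1
    _ = y ^ a / (a * (a + 1)) + y ^ a * exp (-y) / (a + 1) := by
        rw [intervalIntegral.integral_div, integral_add hpow hderiv, hint_pow,
          integral_deriv_rpow_mul_exp_neg ha hy]
        field_simp

lemma rpow_one_sub_mul_mul_sq_rpow_half (d : ℝ) {lam z : ℝ} (hlam : 0 ≤ lam) (hz : 0 ≤ z) :
    z ^ (1 - d) * (lam * z ^ 2) ^ (d / 2) = lam ^ (d / 2) * z := by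
  have hsq : (z ^ 2) ^ (d / 2) = z ^ d := by
    rw [← rpow_natCast, ← rpow_mul hz]
    congr 1
    ring
  rw [mul_rpow hlam (sq_nonneg z), hsq, mul_left_comm, ← rpow_add' hz (by simp), sub_add_cancel,
    rpow_one]

lemma rpow_one_sub_mul_exp_mul_lowerGamma_le {d lam z : ℝ} (hd : 0 < d) (hlam : 0 < lam)
    (hz : 0 ≤ z) :
    z ^ (1 - d) * exp (lam * z ^ 2) * lowerGamma (d / 2) (lam * z ^ 2) ≤
      lam ^ (d / 2) / (d / 2 * (d / 2 + 1)) * (z * exp (lam * z ^ 2) + d / 2 * z) := by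
  have hy : 0 ≤ lam * z ^ 2 := by positivity
  have hscale := rpow_one_sub_mul_mul_sq_rpow_half d hlam.le hz
  calc z ^ (1 - d) * exp (lam * z ^ 2) * lowerGamma (d / 2) (lam * z ^ 2)
      ≤ z ^ (1 - d) * exp (lam * z ^ 2) * ((lam * z ^ 2) ^ (d / 2) / (d / 2 * (d / 2 + 1)) +
          (lam * z ^ 2) ^ (d / 2) * exp (-(lam * z ^ 2)) / (d / 2 + 1)) :=
        mul_le_mul_of_nonneg_left (lowerGamma_le (by positivity) hy)
          (mul_nonneg (rpow_nonneg hz _) (exp_nonneg _))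
    _ = z ^ (1 - d) * (lam * z ^ 2) ^ (d / 2) * (exp (lam * z ^ 2) / (d / 2 * (d / 2 + 1)) +
          exp (lam * z ^ 2 + -(lam * z ^ 2)) / (d / 2 + 1)) := by
        rw [exp_add]
        ring
    _ = lam ^ (d / 2) / (d / 2 * (d / 2 + 1)) * (z * exp (lam * z ^ 2) + d / 2 * z) := by
        rw [hscale, add_neg_cancel, exp_zero]
        field_simp

lemma integral_mul_exp_mul_sq {lam : ℝ} (hlam : lam ≠ 0) (x L : ℝ) :
    ∫ z in x..L, z * exp (lam * z ^ 2) = (exp (lam * L ^ 2) - exp (lam * x ^ 2)) / (2 * lam) := by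
  have hderiv : ∀ z ∈ uIcc x L,
      HasDerivAt (fun w : ℝ => exp (lam * w ^ 2) / (2 * lam)) (z * exp (lam * z ^ 2)) z := by
    intro z _
    have hsq : HasDerivAt (fun w : ℝ => lam * w ^ 2) (lam * (2 * z)) z := by
      simpa using (hasDerivAt_pow 2 z).const_mul lam
    exact (hsq.exp.div_const (2 * lam)).congr_deriv (by field_simp)
  rw [integral_eq_sub_of_hasDerivAt hderiv (Continuous.intervalIntegrable (by fun_prop) x L),
    sub_div]

lemma integral_rpow_one_sub_mul_exp_mul_lowerGamma_le {d lam x L : ℝ} (hd : 0 < d)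
    (hlam : 0 < lam) (hx : 0 ≤ x) (hxL : x ≤ L) :
    ∫ z in x..L, z ^ (1 - d) * exp (lam * z ^ 2) * lowerGamma (d / 2) (lam * z ^ 2) ≤
      lam ^ (d / 2) / (d / 2 * (d / 2 + 1)) *
        ((exp (lam * L ^ 2) - exp (lam * x ^ 2)) / (2 * lam) + d / 2 * ((L ^ 2 - x ^ 2) / 2)) := by
  have hbound : ∫ z in x..L, z ^ (1 - d) * exp (lam * z ^ 2) * lowerGamma (d / 2) (lam * z ^ 2) ≤
      ∫ z in x..L, lam ^ (d / 2) / (d / 2 * (d / 2 + 1)) * (z * exp (lam * z ^ 2) + d / 2 * z) := by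
    simp only [integral_of_le hxL]
    refine setIntegral_mono_of_nonneg (fun z hmem => ?_) (fun z hmem => ?_)
      (Continuous.integrableOn_Ioc (by fun_prop))
    · have hz : 0 ≤ z := hx.trans hmem.1.le
      exact mul_nonneg (mul_nonneg (rpow_nonneg hz _) (exp_nonneg _))
        (lowerGamma_nonneg _ (by positivity))
    · exact rpow_one_sub_mul_exp_mul_lowerGamma_le hd hlam (hx.trans hmem.1.le)
  rwa [intervalIntegral.integral_const_mul,
    integral_add (Continuous.intervalIntegrable (by fun_prop) x L)
      (Continuous.intervalIntegrable (by fun_prop) x L), intervalIntegral.integral_const_mul,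
    integral_id, integral_mul_exp_mul_sq hlam.ne'] at hbound

theorem mfet_upper_bound_sharp_general (d : ℕ) (hd : 1 ≤ d) (lam σ x L : ℝ) (hlam : 0 < lam)
    (hx : 0 ≤ x) (hxL : x ≤ L) :
    mfet d lam σ x L ≤ (2 / (σ ^ 2 * d * (d + 2))) *
      ((1 / lam) * (Real.exp (lam * L ^ 2) - Real.exp (lam * x ^ 2)) +
        ((d : ℝ) / 2) * (L ^ 2 - x ^ 2)) := by
  have hd_pos : (0 : ℝ) < d := by exact_mod_cast hd
  calc mfet d lam σ x L
      ≤ 1 / (lam ^ ((d : ℝ) / 2) * σ ^ 2) * (lam ^ ((d : ℝ) / 2) / (d / 2 * (d / 2 + 1)) *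
          ((exp (lam * L ^ 2) - exp (lam * x ^ 2)) / (2 * lam) + d / 2 * ((L ^ 2 - x ^ 2) / 2))) :=
        mul_le_mul_of_nonneg_left
          (integral_rpow_one_sub_mul_exp_mul_lowerGamma_le hd_pos hlam hx hxL) (by positivity)
    _ = _ := by field_simp

theorem mfet_upper_bound_sharp (d : ℕ) (hd : 1 ≤ d) (lam σ x L : ℝ) (hlam : 0 < lam)
    (hσ : 0 < σ) (hx : 0 ≤ x) (hxL : x ≤ L) :
    mfet d lam σ x L ≤ (2 / (σ ^ 2 * d * (d + 2))) *
      ((1 / lam) * (Real.exp (lam * L ^ 2) - Real.exp (lam * x ^ 2)) +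
        ((d : ℝ) / 2) * (L ^ 2 - x ^ 2)) :=
  mfet_upper_bound_sharp_general d hd lam σ x L hlam hx hxL
end

section
/- Let λ > 0, σ > 0, 0 ≤ x < L, and for each d ∈ ℕ, d ≥ 1, define T_d(x) = (1/(λ^(d/2) σ²)) ∫ₓᴸ z^(1-d) e^(λ z²) γ(d/2, λ z²) dz. Then lim_{d→∞} d·T_d(x) = (L² − x²)/σ². In particular T_d(x) ~ (L² − x²)/(σ² d) as d → ∞, independently of λ. -/
open MeasureTheory intervalIntegral Filter Set Topology

noncomputable def gaussMoment (k : ℕ) (lam z : ℝ) : ℝ :=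
  ∫ u in (0:ℝ)..z, u ^ k * Real.exp (-(lam * u ^ 2))

section gaussMoment

variable (k : ℕ) {lam z : ℝ}

theorem continuous_gaussMoment (lam : ℝ) : Continuous (gaussMoment k lam) :=
  continuous_primitive (fun _ _ => Continuous.intervalIntegrable (by fun_prop) _ _) 0

theorem gaussMoment_nonneg (hz : 0 ≤ z) : 0 ≤ gaussMoment k lam z :=
  integral_nonneg hz fun _ hu => mul_nonneg (pow_nonneg hu.1 k) (Real.exp_nonneg _)

theorem gaussMoment_le (hlam : 0 ≤ lam) (hz : 0 ≤ z) :
    gaussMoment k lam z ≤ z ^ (k + 1) / (k + 1) := by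
  calc gaussMoment k lam z ≤ ∫ u in (0:ℝ)..z, u ^ k := by
        refine integral_mono_on hz (Continuous.intervalIntegrable (by fun_prop) _ _)
          (Continuous.intervalIntegrable (by fun_prop) _ _) fun u hu => ?_
        have : Real.exp (-(lam * u ^ 2)) ≤ 1 := Real.exp_le_one_iff.2 (by nlinarith)
        nlinarith [pow_nonneg hu.1 k]
    _ = z ^ (k + 1) / (k + 1) := by simp [integral_pow]

theorem gaussMoment_recurrence (lam z : ℝ) :
    ((k : ℝ) + 1) * gaussMoment k lam z
      = z ^ (k + 1) * Real.exp (-(lam * z ^ 2)) + 2 * lam * gaussMoment (k + 2) lam z := by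
  have hderiv : ∀ u : ℝ, HasDerivAt (fun u : ℝ => u ^ (k + 1) * Real.exp (-(lam * u ^ 2)))
      (((k : ℝ) + 1) * (u ^ k * Real.exp (-(lam * u ^ 2)))
        - 2 * lam * (u ^ (k + 2) * Real.exp (-(lam * u ^ 2)))) u := by
    intro u
    have hpow : HasDerivAt (fun u : ℝ => u ^ (k + 1)) (((k : ℝ) + 1) * u ^ k) u := by
      simpa using hasDerivAt_pow (k + 1) u
    have hexp : HasDerivAt (fun u : ℝ => Real.exp (-(lam * u ^ 2)))
        (Real.exp (-(lam * u ^ 2)) * -(lam * (2 * u))) u := by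
      simpa using (((hasDerivAt_pow 2 u).const_mul lam).neg).exp
    exact (hpow.mul hexp).congr_deriv (by ring)
  have hint : ∀ j : ℕ, IntervalIntegrable
      (fun u : ℝ => u ^ j * Real.exp (-(lam * u ^ 2))) volume 0 z :=
    fun j => Continuous.intervalIntegrable (by fun_prop) _ _
  have hftc := integral_eq_sub_of_hasDerivAt (fun u _ => hderiv u)
    (((hint k).const_mul _).sub ((hint (k + 2)).const_mul _))
  rw [integral_sub ((hint k).const_mul _) ((hint (k + 2)).const_mul _),
    intervalIntegral.integral_const_mul, intervalIntegral.integral_const_mul,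
    zero_pow k.succ_ne_zero, zero_mul, sub_zero] at hftc
  unfold gaussMoment
  linarith

end gaussMoment

theorem lowerGamma_half_eq_gaussMoment {d : ℕ} (hd : 2 ≤ d) {lam z : ℝ} (hlam : 0 < lam)
    (hz : 0 ≤ z) :
    lowerGamma ((d : ℝ) / 2) (lam * z ^ 2)
      = 2 * lam ^ ((d : ℝ) / 2) * gaussMoment (d - 1) lam z := by
  set p : ℝ := (d : ℝ) / 2 - 1 with hp
  have hp0 : 0 ≤ p := by
    have : (2 : ℝ) ≤ d := by exact_mod_cast hd
    linarith
  have hsubst := integral_deriv_smul_comp (f := fun u : ℝ => lam * u ^ 2)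
    (g := fun t : ℝ => t ^ p * Real.exp (-t)) (a := 0) (b := z)
    (fun u _ => by simpa [mul_comm, mul_left_comm] using (hasDerivAt_pow 2 u).const_mul lam)
    (by fun_prop : ContinuousOn (fun u : ℝ => 2 * lam * u) _)
    ((Real.continuous_rpow_const hp0).mul (Real.continuous_exp.comp continuous_neg))
  simp only [ne_eq, OfNat.ofNat_ne_zero, not_false_eq_true, zero_pow, mul_zero] at hsubst
  rw [lowerGamma, ← hp, ← hsubst, gaussMoment, ← intervalIntegral.integral_const_mul]
  refine integral_congr fun u hu => ?_
  rw [uIcc_of_le hz] at hu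
  have hpow : (lam * u ^ 2) ^ p = lam ^ p * u ^ (d - 2) := by
    rw [Real.mul_rpow hlam.le (sq_nonneg u), ← Real.rpow_natCast u 2, ← Real.rpow_mul hu.1,
      ← Real.rpow_natCast u (d - 2), Nat.cast_sub hd]
    congr 2
    push_cast
    ring
  have hlamp : lam ^ ((d : ℝ) / 2) = lam ^ p * lam := by
    rw [← Real.rpow_add_one hlam.ne', hp]
    ring_nf
  have hupow : u ^ (d - 1) = u * u ^ (d - 2) := by
    rw [← pow_succ']
    congr 1
    omega
  simp only [Function.comp, smul_eq_mul, hpow, hlamp, hupow]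
  ring

noncomputable def mfetRemainder (d : ℕ) (lam z : ℝ) : ℝ :=
  4 * lam * z * Real.exp (lam * z ^ 2) * gaussMoment (d + 1) lam z / z ^ d

section mfetRemainder

variable {d : ℕ} {lam z : ℝ}

theorem natCast_mul_mfet_integrand (hd : 2 ≤ d) (hlam : 0 < lam) (hz : 0 < z) :
    (d : ℝ) * (z ^ ((1 : ℝ) - d) * Real.exp (lam * z ^ 2) * lowerGamma ((d : ℝ) / 2) (lam * z ^ 2))
      = lam ^ ((d : ℝ) / 2) * (2 * z + mfetRemainder d lam z) := by
  obtain ⟨k, rfl⟩ : ∃ k, d = k + 1 := ⟨d - 1, by omega⟩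
  have hrec := gaussMoment_recurrence k lam z
  rw [lowerGamma_half_eq_gaussMoment hd hlam hz.le, Real.rpow_sub hz, Real.rpow_one,
    Real.rpow_natCast, Nat.add_sub_cancel, mfetRemainder]
  calc _ = 2 * lam ^ ((((k + 1 : ℕ) : ℝ)) / 2) * (z / z ^ (k + 1)) * Real.exp (lam * z ^ 2)
        * (((k : ℝ) + 1) * gaussMoment k lam z) := by
        push_cast
        ring
    _ = _ := by
        rw [hrec, Real.exp_neg]
        field_simp
        ring

theorem mfetRemainder_nonneg (hlam : 0 ≤ lam) (hz : 0 ≤ z) : 0 ≤ mfetRemainder d lam z := by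
  have := gaussMoment_nonneg (d + 1) (lam := lam) hz
  unfold mfetRemainder
  positivity

theorem mfetRemainder_le (hlam : 0 ≤ lam) (hz : 0 ≤ z) :
    mfetRemainder d lam z ≤ 4 * lam * z ^ 3 * Real.exp (lam * z ^ 2) / (d + 2) := by
  rcases hz.eq_or_lt with rfl | hz
  · simp [mfetRemainder]
  have hmoment : gaussMoment (d + 1) lam z ≤ z ^ d * z ^ 2 / (d + 2) := by
    convert gaussMoment_le (d + 1) hlam hz.le using 1
    push_cast
    ring
  calc mfetRemainder d lam z
      ≤ 4 * lam * z * Real.exp (lam * z ^ 2) * (z ^ d * z ^ 2 / (d + 2)) / z ^ d := by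
        unfold mfetRemainder
        gcongr
    _ = 4 * lam * z ^ 3 * Real.exp (lam * z ^ 2) / (d + 2) := by
        field_simp

theorem mfetRemainder_le_of_le {L : ℝ} (hlam : 0 ≤ lam) (hz : 0 ≤ z) (hzL : z ≤ L) :
    mfetRemainder d lam z ≤ 4 * lam * L ^ 3 * Real.exp (lam * L ^ 2) / (d + 2) := by
  refine (mfetRemainder_le hlam hz).trans (div_le_div_of_nonneg_right ?_ (by positivity))
  exact mul_le_mul (by gcongr) (Real.exp_le_exp.2 (by gcongr)) (by positivity)
    (by have := hz.trans hzL; positivity)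

theorem intervalIntegrable_mfetRemainder {x L : ℝ} (hlam : 0 ≤ lam) (hx : 0 ≤ x) (hxL : x ≤ L) :
    IntervalIntegrable (mfetRemainder d lam) volume x L := by
  have hmeas : Measurable (mfetRemainder d lam) := by
    unfold mfetRemainder
    have := (continuous_gaussMoment (d + 1) lam).measurable
    fun_prop
  rw [intervalIntegrable_iff_integrableOn_Ioc_of_le hxL]
  refine Integrable.mono' (g := fun _ => 4 * lam * L ^ 3 * Real.exp (lam * L ^ 2) / (d + 2))
    (integrableOn_const measure_Ioc_lt_top.ne) hmeas.aestronglyMeasurable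
    (ae_restrict_of_forall_mem measurableSet_Ioc fun z hz => ?_)
  have hz0 : 0 ≤ z := hx.trans hz.1.le
  rw [Real.norm_of_nonneg (mfetRemainder_nonneg hlam hz0)]
  exact mfetRemainder_le_of_le hlam hz0 hz.2

theorem tendsto_integral_mfetRemainder {x L : ℝ} (hlam : 0 ≤ lam) (hx : 0 ≤ x) (hxL : x ≤ L) :
    Tendsto (fun d : ℕ => ∫ z in x..L, mfetRemainder d lam z) atTop (𝓝 0) := by
  set C := 4 * lam * L ^ 3 * Real.exp (lam * L ^ 2)
  have hbound : ∀ d : ℕ, ∫ z in x..L, mfetRemainder d lam z ≤ (L - x) * (C / (d + 2)) := by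
    intro d
    refine (integral_mono_on hxL (intervalIntegrable_mfetRemainder hlam hx hxL)
      intervalIntegrable_const fun z hz =>
        mfetRemainder_le_of_le hlam (hx.trans hz.1) hz.2).trans_eq ?_
    rw [intervalIntegral.integral_const, smul_eq_mul]
  have hlim : Tendsto (fun d : ℕ => (L - x) * (C / ((d : ℝ) + 2))) atTop (𝓝 0) := by
    simpa using (tendsto_const_div_atTop_nhds_zero_nat C).comp (tendsto_add_atTop_nat 2)
      |>.const_mul (L - x)
  exact tendsto_of_tendsto_of_tendsto_of_le_of_le tendsto_const_nhds hlim
    (fun d => integral_nonneg hxL fun z hz => mfetRemainder_nonneg hlam (hx.trans hz.1)) hbound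

end mfetRemainder

theorem natCast_mul_mfet {d : ℕ} (hd : 2 ≤ d) {lam σ x L : ℝ} (hlam : 0 < lam) (hx : 0 ≤ x)
    (hxL : x ≤ L) :
    (d : ℝ) * mfet d lam σ x L
      = ((L ^ 2 - x ^ 2) + ∫ z in x..L, mfetRemainder d lam z) / σ ^ 2 := by
  have hint : ∫ z in x..L, (d : ℝ) * (z ^ ((1 : ℝ) - d) * Real.exp (lam * z ^ 2) *
      lowerGamma ((d : ℝ) / 2) (lam * z ^ 2))
        = lam ^ ((d : ℝ) / 2) * ∫ z in x..L, (2 * z + mfetRemainder d lam z) := by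
    rw [← intervalIntegral.integral_const_mul]
    refine integral_congr_ae (ae_of_all _ fun z hz => ?_)
    rw [uIoc_of_le hxL] at hz
    exact natCast_mul_mfet_integrand hd hlam (hx.trans_lt hz.1)
  have hmain : ∫ z in x..L, (2 * z + mfetRemainder d lam z)
      = (L ^ 2 - x ^ 2) + ∫ z in x..L, mfetRemainder d lam z := by
    rw [integral_add (Continuous.intervalIntegrable (by fun_prop) _ _)
      (intervalIntegrable_mfetRemainder hlam.le hx hxL), intervalIntegral.integral_const_mul,
      integral_id]
    ring
  rw [mfet, mul_left_comm, ← intervalIntegral.integral_const_mul, hint, hmain]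
  have : lam ^ ((d : ℝ) / 2) ≠ 0 := (Real.rpow_pos_of_pos hlam _).ne'
  field_simp

theorem mfet_asymptotics_general (lam σ x L : ℝ) (hlam : 0 < lam)
    (hx : 0 ≤ x) (hxL : x < L) :
    Filter.Tendsto (fun d : ℕ => (d : ℝ) * mfet d lam σ x L) Filter.atTop
      (nhds ((L ^ 2 - x ^ 2) / σ ^ 2)) := by
  have hlim := ((tendsto_integral_mfetRemainder hlam.le hx hxL.le).const_add
    (L ^ 2 - x ^ 2)).div_const (σ ^ 2)
  rw [add_zero] at hlim
  refine hlim.congr' ?_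
  filter_upwards [eventually_ge_atTop 2] with d hd
  exact (natCast_mul_mfet hd hlam hx hxL.le).symm

theorem mfet_asymptotics (lam σ x L : ℝ) (hlam : 0 < lam) (hσ : 0 < σ)
    (hx : 0 ≤ x) (hxL : x < L) :
    Filter.Tendsto (fun d : ℕ => (d : ℝ) * mfet d lam σ x L) Filter.atTop
      (nhds ((L ^ 2 - x ^ 2) / σ ^ 2)) :=
  mfet_asymptotics_general lam σ x L hlam hx hxL
end
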